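/- Let n ≥ 2, let k_0, …, k_{n−1} > 0, γ_1, …, γ_n > 0 and y_2 ≥ 0, and define ψ(y_2) = 1 / (1 + Σ_{j=1}^n (1/j!)·(k_0⋯k_{j−1})/(γ_1⋯γ_j)·y_2^j). Then the tuple x_0 = ψ(y_2), x_j = (1/j!)·(k_0⋯k_{j−1})/(γ_1⋯γ_j)·y_2^j·ψ(y_2) for 1 ≤ j ≤ n−1, is the unique solution of the linear system 0 = γ_1 x_1 − k_0 y_2 x_0; 0 = k_{j−1} y_2 x_{j−1} + (j+1)γ_{j+1} x_{j+1} − (k_j y_2 + jγ_j) x_j for 1 ≤ j ≤ n−2; 0 = k_{n−2} x_{n−2} y_2 + nγ_n(1 − Σ_{j=0}^{n−1} x_j) − (k_{n−1} y_2 + (n−1)γ_{n−1}) x_{n−1}. -/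

import Mathlib

/-!
Read the promoter states `0, …, n` as a birth–death chain with up-rates `k_j y₂` and down-rates
`(j+1) γ_{j+1}`, the last occupancy being `x_n = 1 - ∑_{j<n} x_j`. The first equation says that
the net flux between states `0` and `1` vanishes and each later one that two consecutive fluxes
agree, so the system says that all fluxes vanish. The coefficients `c_j` obey the same zero-flux
recursion `(j+1) γ_{j+1} c_{j+1} = k_j c_j`, so the solutions are exactly the multiples
`x_j = c_j y₂^j x_0`, and `∑ x_j = 1` fixes `x_0 = ψ(y₂)`.
-/

open Finset

namespace Hes1

section Chain

variable {K : Type*} [Field K]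

/-- Net flux from state `j + 1` down to state `j` of a birth–death chain with birth rates `b`
and death rates `a`. -/
def flux (a b x : ℕ → K) (j : ℕ) : K := a (j + 1) * x (j + 1) - b j * x j

theorem forall_flux_eq_zero_iff {a b w x : ℕ → K} {N : ℕ} (ha : ∀ j < N, a (j + 1) ≠ 0)
    (hw : ∀ j < N, flux a b w j = 0) (hw0 : w 0 = 1) :
    (∀ j < N, flux a b x j = 0) ↔ ∀ j ≤ N, x j = w j * x 0 := by
  constructor
  · intro hx j hj
    induction j with
    | zero => rw [hw0, one_mul]
    | succ j ih =>
      have hwj := hw j hj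
      have hxj := hx j hj
      rw [flux, ih (Nat.le_of_succ_le hj)] at hxj
      rw [flux] at hwj
      exact mul_left_cancel₀ (ha j hj) (by linear_combination hxj - x 0 * hwj)
  · intro hx j hj
    have hwj := hw j hj
    rw [flux] at hwj ⊢
    rw [hx j hj.le, hx (j + 1) hj]
    linear_combination x 0 * hwj

/-- The occupancy of the last state, eliminated through conservation of probability
(the paper's `1 - ∑_{j<n} x_j`). -/
def extendByConservation (x : ℕ → K) (N : ℕ) : ℕ → K :=
  Function.update x N (1 - ∑ j ∈ range N, x j)

theorem extendByConservation_of_lt (x : ℕ → K) {N j : ℕ} (hj : j < N) :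
    extendByConservation x N j = x j :=
  Function.update_of_ne hj.ne _ _

theorem extendByConservation_self (x : ℕ → K) (N : ℕ) :
    extendByConservation x N N = 1 - ∑ j ∈ range N, x j :=
  Function.update_self _ _ _

theorem sum_extendByConservation (x : ℕ → K) (N : ℕ) :
    ∑ j ∈ range (N + 1), extendByConservation x N j = 1 := by
  rw [sum_range_succ, extendByConservation_self,
    sum_congr rfl fun j hj => extendByConservation_of_lt x (mem_range.mp hj)]
  ring

theorem forall_eq_mul_iff_forall_eq_div {w X : ℕ → K} {N : ℕ} (hw0 : w 0 = 1)
    (hZ : ∑ j ∈ range (N + 1), w j ≠ 0) (hX : ∑ j ∈ range (N + 1), X j = 1) :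
    (∀ j ≤ N, X j = w j * X 0) ↔ ∀ j < N, X j = w j / ∑ i ∈ range (N + 1), w i := by
  set Z := ∑ i ∈ range (N + 1), w i
  constructor
  · intro hXw j _
    have hZX0 : Z * X 0 = 1 := by
      rw [← hX, sum_mul]
      exact sum_congr rfl fun i hi => (hXw i (Nat.lt_succ_iff.mp (mem_range.mp hi))).symm
    rw [hXw j (by omega), eq_div_iff hZ]
    linear_combination w j * hZX0
  · intro hXw
    have hXN : X N = w N / Z := by
      rw [sum_range_succ, sum_congr rfl fun j hj => hXw j (mem_range.mp hj)] at hX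
      have hZN : Z = ∑ j ∈ range N, w j + w N := sum_range_succ w N
      rw [← sum_div] at hX
      field_simp at hX ⊢
      linear_combination hX + hZN
    have hXle : ∀ j ≤ N, X j = w j / Z := fun j hj =>
      (Nat.lt_or_eq_of_le hj).elim (hXw j) fun h => h ▸ hXN
    intro j hj
    rw [hXle j hj, hXle 0 (Nat.zero_le _), hw0]
    ring

theorem sum_range_succ_eq_add_sum_Icc {M : Type*} [AddCommMonoid M] (f : ℕ → M) (N : ℕ) :
    ∑ j ∈ range (N + 1), f j = f 0 + ∑ j ∈ Icc 1 N, f j := by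
  rw [Nat.range_succ_eq_Icc_zero, ← insert_Icc_add_one_left_eq_Icc N.zero_le,
    sum_insert (by simp), zero_add]

theorem forall_lt_succ_eq_zero_iff {G : Type*} [AddGroup G] (F : ℕ → G) (N : ℕ) :
    (∀ j < N + 1, F j = 0) ↔ F 0 = 0 ∧ ∀ j < N, F (j + 1) = F j := by
  constructor
  · intro hF
    exact ⟨hF 0 N.succ_pos, fun j hj => by rw [hF j (by omega), hF (j + 1) (by omega)]⟩
  · rintro ⟨hF0, hFsucc⟩ j hj
    induction j with
    | zero => exact hF0
    | succ j ih => rw [hFsucc j (by omega), ih (by omega)]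

end Chain

section Model

noncomputable def bindingCoeff (kk γ : ℕ → ℝ) (j : ℕ) : ℝ :=
  (1 / (Nat.factorial j : ℝ)) * (∏ i ∈ range j, kk i) / (∏ i ∈ Icc 1 j, γ i)

variable {kk γ : ℕ → ℝ}

theorem bindingCoeff_zero : bindingCoeff kk γ 0 = 1 := by
  simp [bindingCoeff]

theorem bindingCoeff_pos {j : ℕ} (hkk : ∀ i < j, 0 < kk i) (hγ : ∀ i ∈ Icc 1 j, 0 < γ i) :
    0 < bindingCoeff kk γ j := by
  unfold bindingCoeff
  have := prod_pos fun i hi => hkk i (mem_range.mp hi)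
  have := prod_pos hγ
  positivity

theorem succ_mul_bindingCoeff_succ {j : ℕ} (hγ : ∀ i ∈ Icc 1 (j + 1), γ i ≠ 0) :
    ((j : ℝ) + 1) * γ (j + 1) * bindingCoeff kk γ (j + 1) = kk j * bindingCoeff kk γ j := by
  have hγj : ∏ i ∈ Icc 1 j, γ i ≠ 0 :=
    prod_ne_zero_iff.mpr fun i hi => hγ i (Icc_subset_Icc_right j.le_succ hi)
  have hγsucc := hγ (j + 1) (right_mem_Icc.mpr (Nat.le_add_left 1 j))
  rw [bindingCoeff, bindingCoeff, prod_range_succ, prod_Icc_succ_top (by omega),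
    Nat.factorial_succ]
  push_cast
  field_simp

theorem flux_bindingCoeff_mul_pow (y2 : ℝ) {j : ℕ} (hγ : ∀ i ∈ Icc 1 (j + 1), γ i ≠ 0) :
    flux (fun i => i * γ i) (fun i => kk i * y2) (fun i => bindingCoeff kk γ i * y2 ^ i) j = 0 := by
  have h := succ_mul_bindingCoeff_succ (kk := kk) hγ
  simp only [flux]
  push_cast
  linear_combination y2 ^ (j + 1) * h

def BindingSystem (n : ℕ) (kk γ : ℕ → ℝ) (y2 : ℝ) (x : ℕ → ℝ) : Prop :=
  (0 = γ 1 * x 1 - kk 0 * y2 * x 0) ∧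
  (∀ j, 1 ≤ j → j ≤ n - 2 →
    0 = kk (j - 1) * y2 * x (j - 1) + ((j : ℝ) + 1) * γ (j + 1) * x (j + 1)
      - (kk j * y2 + (j : ℝ) * γ j) * x j) ∧
  (0 = kk (n - 2) * x (n - 2) * y2
    + (n : ℝ) * γ n * (1 - ∑ j ∈ Finset.range n, x j)
    - (kk (n - 1) * y2 + ((n : ℝ) - 1) * γ (n - 1)) * x (n - 1))

theorem bindingSystem_iff (m : ℕ) (y2 : ℝ) (x : ℕ → ℝ) :
    BindingSystem (m + 2) kk γ y2 x ↔ ∀ j < m + 2,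
      flux (fun i => i * γ i) (fun i => kk i * y2) (extendByConservation x (m + 2)) j = 0 := by
  set F := flux (fun i => i * γ i) (fun i => kk i * y2) (extendByConservation x (m + 2))
  have hX : ∀ j < m + 2, extendByConservation x (m + 2) j = x j :=
    fun j hj => extendByConservation_of_lt x hj
  have h0 : (0 = γ 1 * x 1 - kk 0 * y2 * x 0) ↔ F 0 = 0 := by
    simp only [F, flux, hX 0 (by omega), hX 1 (by omega)]
    push_cast
    constructor <;> intro h <;> linear_combination -h
  have hmid : (∀ j, 1 ≤ j → j ≤ m + 2 - 2 →
      0 = kk (j - 1) * y2 * x (j - 1) + ((j : ℝ) + 1) * γ (j + 1) * x (j + 1)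
        - (kk j * y2 + (j : ℝ) * γ j) * x j) ↔ ∀ j < m, F (j + 1) = F j := by
    have hstep : ∀ i < m, (0 = kk i * y2 * x i + (((i + 1 : ℕ) : ℝ) + 1) * γ (i + 2) * x (i + 2)
        - (kk (i + 1) * y2 + ((i + 1 : ℕ) : ℝ) * γ (i + 1)) * x (i + 1)) ↔ F (i + 1) = F i := by
      intro i hi
      simp only [F, flux, hX i (by omega), hX (i + 1) (by omega), hX (i + 2) (by omega)]
      push_cast
      constructor <;> intro h <;> linear_combination -h
    constructor
    · intro h i hi
      exact (hstep i hi).mp (h (i + 1) (by omega) (by omega))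
    · intro h j hj1 hj2
      obtain ⟨i, rfl⟩ : ∃ i, j = i + 1 := ⟨j - 1, by omega⟩
      exact (hstep i (by omega)).mpr (h i (by omega))
  have hlast : (0 = kk (m + 2 - 2) * x (m + 2 - 2) * y2
      + ((m + 2 : ℕ) : ℝ) * γ (m + 2) * (1 - ∑ j ∈ Finset.range (m + 2), x j)
      - (kk (m + 2 - 1) * y2 + (((m + 2 : ℕ) : ℝ) - 1) * γ (m + 2 - 1)) * x (m + 2 - 1))
      ↔ F (m + 1) = F m := by
    simp only [F, flux, hX m (by omega), hX (m + 1) (by omega), extendByConservation_self,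
      Nat.add_sub_cancel, show m + 2 - 1 = m + 1 by omega]
    push_cast
    constructor <;> intro h <;> linear_combination -h
  rw [forall_lt_succ_eq_zero_iff F (m + 1), Nat.forall_lt_succ_right, BindingSystem, h0, hmid, hlast]

end Model

end Hes1

/-- For a fixed dimer concentration `y₂ ≥ 0`, the quasi-stationary tuple
`x_0 = ψ(y₂)`, `x_j = c_j y₂^j ψ(y₂)` is the unique solution of the
linear binding-site system. -/
theorem stmt_3 (n : ℕ) (hn : 2 ≤ n) (kk γ : ℕ → ℝ)
    (hkk : ∀ j < n, 0 < kk j) (hγ : ∀ j ∈ Finset.Icc 1 n, 0 < γ j)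
    (y2 : ℝ) (hy2 : 0 ≤ y2) (c : ℕ → ℝ)
    (hcdef : ∀ j, c j = (1 / (Nat.factorial j : ℝ)) *
        (∏ i ∈ Finset.range j, kk i) / (∏ i ∈ Finset.Icc 1 j, γ i))
    (ψ : ℝ) (hψ : ψ = 1 / (1 + ∑ j ∈ Finset.Icc 1 n, c j * y2 ^ j))
    (x : ℕ → ℝ) :
    ((0 = γ 1 * x 1 - kk 0 * y2 * x 0) ∧
     (∀ j, 1 ≤ j → j ≤ n - 2 →
        0 = kk (j - 1) * y2 * x (j - 1) + ((j : ℝ) + 1) * γ (j + 1) * x (j + 1)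
            - (kk j * y2 + (j : ℝ) * γ j) * x j) ∧
     (0 = kk (n - 2) * x (n - 2) * y2
          + (n : ℝ) * γ n * (1 - ∑ j ∈ Finset.range n, x j)
          - (kk (n - 1) * y2 + ((n : ℝ) - 1) * γ (n - 1)) * x (n - 1)))
    ↔ (∀ j < n, x j = c j * y2 ^ j * ψ) := by
  obtain ⟨m, rfl⟩ : ∃ m, n = m + 2 := ⟨n - 2, by omega⟩
  obtain rfl : c = Hes1.bindingCoeff kk γ := funext hcdef
  set w : ℕ → ℝ := fun j => Hes1.bindingCoeff kk γ j * y2 ^ j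
  set X := Hes1.extendByConservation x (m + 2)
  have hγ0 : ∀ j < m + 2, ∀ i ∈ Icc 1 (j + 1), γ i ≠ 0 := fun j hj i hi =>
    (hγ i (Icc_subset_Icc_right (by omega) hi)).ne'
  have hw0 : w 0 = 1 := by simp [w, Hes1.bindingCoeff_zero]
  have hZ : ∑ j ∈ range (m + 3), w j = 1 + ∑ j ∈ Icc 1 (m + 2), w j := by
    rw [Hes1.sum_range_succ_eq_add_sum_Icc, hw0]
  have hZpos : 0 < ∑ j ∈ range (m + 3), w j := by
    refine hZ ▸ add_pos_of_pos_of_nonneg one_pos (sum_nonneg fun j hj => ?_)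
    have hj := (mem_Icc.mp hj).2
    exact mul_nonneg (Hes1.bindingCoeff_pos (fun i hi => hkk i (by omega))
      (fun i hi => hγ i (Icc_subset_Icc_right hj hi))).le (pow_nonneg hy2 j)
  calc _ ↔ ∀ j < m + 2, Hes1.flux (fun i => i * γ i) (fun i => kk i * y2) X j = 0 :=
        Hes1.bindingSystem_iff m y2 x
    _ ↔ ∀ j ≤ m + 2, X j = w j * X 0 :=
        Hes1.forall_flux_eq_zero_iff
          (fun j hj => mul_ne_zero (Nat.cast_ne_zero.mpr j.succ_ne_zero)
            (hγ0 j hj _ (right_mem_Icc.mpr (by omega))))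
          (fun j hj => Hes1.flux_bindingCoeff_mul_pow y2 (hγ0 j hj)) hw0
    _ ↔ ∀ j < m + 2, X j = w j / ∑ i ∈ range (m + 3), w i :=
        Hes1.forall_eq_mul_iff_forall_eq_div hw0 hZpos.ne' (Hes1.sum_extendByConservation x _)
    _ ↔ _ := by
      rw [hψ, ← hZ]
      refine forall₂_congr fun j hj => ?_
      rw [show X j = x j from Hes1.extendByConservation_of_lt x hj, mul_one_div]
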